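/- Let p_{3,k}(x) = C(3,k)x^k(1−x)^{3−k}, k = 0,…,3, be the classical Bernstein basis of ℙ₃[0,1], and let f₁(x) = 3x/8 − x²/2 + x³/3. Then f₁′(x) = (x − 1/2)² + 1/8 > 0 for all x ∈ [0,1], and f₁′ = (3/8)p_{2,0} − (1/8)p_{2,1} + (3/8)p_{2,2} in the degree-2 classical Bernstein basis of ℙ₂[0,1]; nevertheless, there exist no non-decreasing nodes t_{3,0} ≤ t_{3,1} ≤ t_{3,2} ≤ t_{3,3} in [0,1] and strictly positive weights α_{3,0},…,α_{3,3} such that the operator B₃f = Σ_{k=0}^3 f(t_{3,k}) α_{3,k} p_{3,k} fixes both the constant function 1 and f₁. Hence strict positivity of (f₁/f₀)′ on [a,b] is not sufficient for the existence of a generalized Bernstein operator with non-decreasing nodes. -/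

import Mathlib

open Set

noncomputable section

/-- The classical Bernstein basis of `ℙ₃[0,1]`. -/
def pB3'' : Fin 4 → ℝ → ℝ :=
  fun k x => (Nat.choose 3 (k : ℕ)) * x ^ (k : ℕ) * (1 - x) ^ (3 - (k : ℕ))

/-- The classical Bernstein basis of `ℙ₂[0,1]`. -/
def pB2 : Fin 3 → ℝ → ℝ :=
  fun k x => (Nat.choose 2 (k : ℕ)) * x ^ (k : ℕ) * (1 - x) ^ (2 - (k : ℕ))

/-- The function `f₁(x) = 3x/8 - x²/2 + x³/3`. -/
def f₁B : ℝ → ℝ := fun x => 3 * x / 8 - x ^ 2 / 2 + x ^ 3 / 3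

/-
Reproducing `1` and `f₁` pins down the operator: since the `p₃ₖ` are linearly independent and
already sum to `1`, all weights must equal `1`, and then `f₁(t₃ₖ)` must be the `k`-th Bernstein
coefficient of `f₁`, namely `0, 1/8, 1/12, 5/24`. The coefficients decrease from `k = 1` to
`k = 2`, whereas `f₁` is strictly increasing, so `t₃₁ > t₃₂`.
-/

lemma sum_pB3''_apply (k : Fin 4 → ℝ) (x : ℝ) :
    ∑ i, k i * pB3'' i x = k 0 * (1 - x) ^ 3 + 3 * k 1 * x * (1 - x) ^ 2 +
      3 * k 2 * x ^ 2 * (1 - x) + k 3 * x ^ 3 := by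
  simp only [Fin.sum_univ_four, pB3'']
  norm_num
  ring

lemma sum_mul_pB3''_injective :
    Function.Injective fun c : Fin 4 → ℝ => fun x => ∑ k, c k * pB3'' k x := by
  intro c d h
  have eval (x : ℝ) := congrFun h x
  have e0 := eval 0
  have e1 := eval 1
  have e13 := eval (1 / 3)
  have e23 := eval (2 / 3)
  simp only [sum_pB3''_apply] at e0 e1 e13 e23
  norm_num at e0 e1 e13 e23
  funext k
  fin_cases k <;> dsimp <;> linarith

lemma sum_pB3'' (x : ℝ) : ∑ k, 1 * pB3'' k x = 1 := by
  rw [sum_pB3''_apply]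
  ring

lemma f₁B_eq_sum_pB3'' (x : ℝ) : ∑ k, ![0, 1 / 8, 1 / 12, 5 / 24] k * pB3'' k x = f₁B x := by
  rw [sum_pB3''_apply]
  simp only [f₁B, Matrix.cons_val, Matrix.cons_val_zero, Matrix.cons_val_one]
  ring

lemma hasDerivAt_f₁B (x : ℝ) : HasDerivAt f₁B ((x - 1 / 2) ^ 2 + 1 / 8) x := by
  have h : HasDerivAt f₁B (3 * 1 / 8 - 2 * x ^ 1 / 2 + 3 * x ^ 2 / 3) x :=
    (((hasDerivAt_id' x).const_mul 3).div_const 8).sub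
      ((hasDerivAt_pow 2 x).div_const 2) |>.add ((hasDerivAt_pow 3 x).div_const 3)
  exact h.congr_deriv (by ring)

lemma deriv_f₁B (x : ℝ) : deriv f₁B x = (x - 1 / 2) ^ 2 + 1 / 8 :=
  (hasDerivAt_f₁B x).deriv

lemma deriv_f₁B_pos (x : ℝ) : 0 < deriv f₁B x := by
  rw [deriv_f₁B]
  positivity

lemma deriv_f₁B_eq_sum_pB2 (x : ℝ) :
    deriv f₁B x = 3 / 8 * pB2 0 x - 1 / 8 * pB2 1 x + 3 / 8 * pB2 2 x := by
  rw [deriv_f₁B]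
  norm_num [pB2]
  ring

lemma strictMono_f₁B : StrictMono f₁B :=
  strictMono_of_deriv_pos deriv_f₁B_pos

/-- For `f₁(x) = 3x/8 - x²/2 + x³/3` one has `f₁'(x) = (x - 1/2)² + 1/8 > 0` on `[0,1]`,
with Bernstein expansion `f₁' = (3/8)p₂₀ - (1/8)p₂₁ + (3/8)p₂₂`; nevertheless no generalized
Bernstein operator on `ℙ₃[0,1]` with non-decreasing nodes and strictly positive weights
fixes both `1` and `f₁`.  Hence strict positivity of `(f₁/f₀)'` on `[a,b]` does not suffice
for the existence of a generalized Bernstein operator with non-decreasing nodes. -/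
theorem positivity_of_deriv_not_sufficient_for_monotone_nodes :
    (∀ x : ℝ, deriv f₁B x = (x - 1 / 2) ^ 2 + 1 / 8) ∧
    (∀ x ∈ Set.Icc (0 : ℝ) 1, 0 < deriv f₁B x) ∧
    (∀ x : ℝ, deriv f₁B x = 3 / 8 * pB2 0 x - 1 / 8 * pB2 1 x + 3 / 8 * pB2 2 x) ∧
    ¬ ∃ t α : Fin 4 → ℝ, Monotone t ∧ (∀ k, t k ∈ Set.Icc (0 : ℝ) 1) ∧ (∀ k, 0 < α k) ∧
        (∀ x : ℝ, ∑ k, α k * pB3'' k x = 1) ∧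
        (∀ x : ℝ, ∑ k, f₁B (t k) * α k * pB3'' k x = f₁B x) := by
  refine ⟨deriv_f₁B, fun x _ => deriv_f₁B_pos x, deriv_f₁B_eq_sum_pB2, ?_⟩
  rintro ⟨t, α, ht, -, -, hα_one, hα_f₁⟩
  have hα : α = fun _ => 1 :=
    sum_mul_pB3''_injective <| funext fun x => (hα_one x).trans (sum_pB3'' x).symm
  have hcoeff : (fun k => f₁B (t k) * α k) = ![0, 1 / 8, 1 / 12, 5 / 24] :=
    sum_mul_pB3''_injective <| funext fun x => (hα_f₁ x).trans (f₁B_eq_sum_pB3'' x).symm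
  subst hα
  have h₁ : f₁B (t 1) = 1 / 8 := by simpa using congrFun hcoeff 1
  have h₂ : f₁B (t 2) = 1 / 12 := by simpa using congrFun hcoeff 2
  have hle : f₁B (t 1) ≤ f₁B (t 2) := strictMono_f₁B.monotone (ht (by decide))
  rw [h₁, h₂] at hle
  norm_num at hle

end
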